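/- The restriction of the principal fundamental matrix solution X^L to [0,∞) is locally absolutely continuous; precisely, there exists a locally Lebesgue integrable function D : [0,∞) → M_n(𝕂) such that X^L(t) = I + ∫_0^t D(s) ds for all t ≥ 0. -/

import Mathlib

open MeasureTheory
open Filter Set Topology
open scoped NNReal

section Aux

variable {F : Type*} [NormedAddCommGroup F] [NormedSpace ℝ F]

/-- Sequential difference quotients converge to the derivative. -/
theorem seq_slope_tendsto {f : ℝ → F} {d : F} {s : ℝ} (h : HasDerivAt f d s) :
    Tendsto (fun k : ℕ => ((k : ℝ) + 1) • (f (s + ((k : ℝ) + 1)⁻¹) - f s)) atTop (𝓝 d) := by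
  have hs := hasDerivAt_iff_tendsto_slope.1 h
  have h0 : Tendsto (fun k : ℕ => ((k : ℝ) + 1)⁻¹) atTop (𝓝 0) := by
    simpa [one_div] using tendsto_one_div_add_atTop_nhds_zero_nat (𝕜 := ℝ)
  have h1 : Tendsto (fun k : ℕ => s + ((k : ℝ) + 1)⁻¹) atTop (𝓝[≠] s) := by
    refine tendsto_nhdsWithin_of_tendsto_nhds_of_eventually_within _ ?_ ?_
    · simpa using tendsto_const_nhds.add h0
    · refine Filter.Eventually.of_forall fun k => ?_
      have hkpos : (0 : ℝ) < ((k : ℝ) + 1)⁻¹ := by positivity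
      simp only [Set.mem_compl_iff, Set.mem_singleton_iff]
      intro hEq
      nlinarith [hEq]
  have h2 := hs.comp h1
  refine h2.congr fun k => ?_
  have hk : ((k : ℝ) + 1) ≠ 0 := by positivity
  simp [Function.comp, slope_def_module, add_sub_cancel_left, inv_inv]

theorem norm_deriv_le_of_lipschitzWith {K : ℝ≥0} {f : ℝ → F} (hf : LipschitzWith K f) (s : ℝ) :
    ‖deriv f s‖ ≤ K := by
  by_cases hd : DifferentiableAt ℝ f s
  · have h1 := (seq_slope_tendsto hd.hasDerivAt).norm
    refine le_of_tendsto h1 (Filter.Eventually.of_forall fun k => ?_)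
    have hk : (0 : ℝ) < (k : ℝ) + 1 := by positivity
    have hb : ‖f (s + ((k : ℝ) + 1)⁻¹) - f s‖ ≤ K * ((k : ℝ) + 1)⁻¹ := by
      have := hf.dist_le_mul (s + ((k : ℝ) + 1)⁻¹) s
      simpa [dist_eq_norm, abs_of_pos hk] using this
    calc ‖((k : ℝ) + 1) • (f (s + ((k : ℝ) + 1)⁻¹) - f s)‖
        = ((k : ℝ) + 1) * ‖f (s + ((k : ℝ) + 1)⁻¹) - f s‖ := by
          rw [norm_smul, Real.norm_eq_abs, abs_of_pos hk]
      _ ≤ ((k : ℝ) + 1) * ((K : ℝ) * ((k : ℝ) + 1)⁻¹) := by gcongr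
      _ = K := by field_simp
  · rw [deriv_zero_of_not_differentiableAt hd]; simp

/-- FTC for Lipschitz functions (via Rademacher + dominated convergence). -/
theorem lipschitz_integral_deriv [CompleteSpace F] [FiniteDimensional ℝ F] {K : ℝ≥0} {f : ℝ → F}
    (hf : LipschitzWith K f) {t : ℝ} (ht : 0 ≤ t) :
    ∫ s in (0:ℝ)..t, deriv f s = f t - f 0 := by
  have hc := hf.continuous
  have hint : ∀ a b : ℝ, IntervalIntegrable f volume a b := fun a b =>
    hc.intervalIntegrable a b
  set A : ℝ → F := fun u => ∫ s in (0:ℝ)..u, f s with hA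
  have hAderiv : ∀ u : ℝ, HasDerivAt A (f u) u := fun u =>
    intervalIntegral.integral_hasDerivAt_right (hint 0 u)
      (hc.stronglyMeasurable.stronglyMeasurableAtFilter) hc.continuousAt
  set g : ℕ → ℝ → F := fun k s => ((k : ℝ) + 1) • (f (s + ((k : ℝ) + 1)⁻¹) - f s) with hg
  have key : Tendsto (fun k => ∫ s in Set.Ioc (0:ℝ) t, g k s) atTop
      (𝓝 (∫ s in Set.Ioc (0:ℝ) t, deriv f s)) := by
    refine tendsto_integral_of_dominated_convergence (fun _ => (K : ℝ)) ?_ ?_ ?_ ?_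
    · intro k
      exact ((((hc.comp (continuous_id.add continuous_const)).sub hc).const_smul
        _).aestronglyMeasurable)
    · exact (integrableOn_const measure_Ioc_lt_top.ne)
    · intro k
      refine Filter.Eventually.of_forall fun s => ?_
      have hk : (0 : ℝ) < (k : ℝ) + 1 := by positivity
      have hb : ‖f (s + ((k : ℝ) + 1)⁻¹) - f s‖ ≤ K * ((k : ℝ) + 1)⁻¹ := by
        have := hf.dist_le_mul (s + ((k : ℝ) + 1)⁻¹) s
        simpa [dist_eq_norm, abs_of_pos hk] using this
      calc ‖((k : ℝ) + 1) • (f (s + ((k : ℝ) + 1)⁻¹) - f s)‖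
          = ((k : ℝ) + 1) * ‖f (s + ((k : ℝ) + 1)⁻¹) - f s‖ := by
            rw [norm_smul, Real.norm_eq_abs, abs_of_pos hk]
        _ ≤ ((k : ℝ) + 1) * ((K : ℝ) * ((k : ℝ) + 1)⁻¹) := by gcongr
        _ = K := by field_simp
    · have hd : ∀ᵐ s ∂(volume.restrict (Set.Ioc (0:ℝ) t)), DifferentiableAt ℝ f s :=
        ae_restrict_of_ae hf.ae_differentiableAt
      filter_upwards [hd] with s hs
      exact seq_slope_tendsto hs.hasDerivAt
  have comp : ∀ k : ℕ, ∫ s in Set.Ioc (0:ℝ) t, g k s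
      = (((k : ℝ) + 1) • (A (t + ((k : ℝ) + 1)⁻¹) - A t))
        - (((k : ℝ) + 1) • (A (0 + ((k : ℝ) + 1)⁻¹) - A 0)) := by
    intro k
    set h : ℝ := ((k : ℝ) + 1)⁻¹ with hh
    have hinth : IntervalIntegrable (fun s => f (s + h)) volume 0 t :=
      (hc.comp (continuous_id.add continuous_const)).intervalIntegrable 0 t
    rw [← intervalIntegral.integral_of_le ht]
    have e1 : (∫ s in (0:ℝ)..t, g k s)
        = ((k : ℝ) + 1) • ((∫ s in (0:ℝ)..t, f (s + h)) - ∫ s in (0:ℝ)..t, f s) := by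
      rw [← intervalIntegral.integral_sub hinth (hint 0 t), ← intervalIntegral.integral_smul]
    rw [e1, intervalIntegral.integral_comp_add_right f h]
    have e2 : A (t + h) - A h = ∫ s in h..(t + h), f s :=
      intervalIntegral.integral_interval_sub_left (hint 0 (t + h)) (hint 0 h)
    have hA0 : A 0 = 0 := intervalIntegral.integral_same
    rw [zero_add, ← e2, hA0, ← smul_sub]
    congr 1
    abel
  have lim2 : Tendsto (fun k => ∫ s in Set.Ioc (0:ℝ) t, g k s) atTop (𝓝 (f t - f 0)) := by
    simp only [comp]
    exact (seq_slope_tendsto (hAderiv t)).sub (by simpa using seq_slope_tendsto (hAderiv 0))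
  rw [intervalIntegral.integral_of_le ht]
  exact tendsto_nhds_unique key lim2

end Aux

/-- `X` is the principal fundamental matrix solution of `ẋ(t) = L x_t`:
`X = O` on `[-r,0)`, `X` continuous on `[0,∞)`, `X(0) = I`, and for every `ξ` and
`t ≥ 0`, `X(t)ξ = ξ + L(θ ↦ ∫_0^{max(t+θ,0)} X(s)ξ ds)`.  Here `n×n` matrices are
identified with continuous linear maps `𝕂ⁿ → 𝕂ⁿ` (operator norm). -/
def IsPFMS {𝕜 : Type*} [RCLike 𝕜] {n : ℕ} (r : ℝ)
    (L : C(Set.Icc (-r) (0:ℝ), Fin n → 𝕜) →L[𝕜] (Fin n → 𝕜))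
    (X : ℝ → ((Fin n → 𝕜) →L[𝕜] (Fin n → 𝕜))) : Prop :=
  (∀ t ∈ Set.Ico (-r) (0:ℝ), X t = 0) ∧
  ContinuousOn X (Set.Ici (0:ℝ)) ∧ X 0 = 1 ∧
  ∀ ξ : Fin n → 𝕜, ∀ t, 0 ≤ t → ∃ ψ : C(Set.Icc (-r) (0:ℝ), Fin n → 𝕜),
    (∀ θ : Set.Icc (-r) (0:ℝ), ψ θ = ∫ s in (0:ℝ)..(max (t + (θ : ℝ)) 0), X s ξ) ∧
    X t ξ = ξ + L ψ

/-- The restriction of the principal fundamental matrix solution to `[0,∞)` is locally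
absolutely continuous: there is a locally Lebesgue integrable `D : [0,∞) → M_n(𝕂)` with
`X(t) = I + ∫_0^t D(s) ds` for all `t ≥ 0`. -/
theorem stmt_5 {𝕜 : Type*} [RCLike 𝕜] {n : ℕ} (hn : 0 < n) {r : ℝ} (hr : 0 < r)
    (L : C(Set.Icc (-r) (0:ℝ), Fin n → 𝕜) →L[𝕜] (Fin n → 𝕜))
    (X : ℝ → ((Fin n → 𝕜) →L[𝕜] (Fin n → 𝕜))) (hX : IsPFMS r L X) :
    ∃ D : ℝ → ((Fin n → 𝕜) →L[𝕜] (Fin n → 𝕜)),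
      LocallyIntegrableOn D (Set.Ici (0:ℝ)) ∧
      ∀ t, 0 ≤ t → X t = 1 + ∫ s in (0:ℝ)..t, D s := by
  obtain ⟨hzero, hcont, hX0, hmain⟩ := hX
  haveI hFD : FiniteDimensional ℝ ((Fin n → 𝕜) →L[𝕜] (Fin n → 𝕜)) := Module.Finite.trans 𝕜 _
  -- `X` is Lipschitz on every `Icc 0 T`.
  have key : ∀ T : ℝ, 0 ≤ T → ∃ C : ℝ≥0, LipschitzOnWith C X (Set.Icc 0 T) := by
    intro T hT
    obtain ⟨M0, hM0⟩ := (isCompact_Icc : IsCompact (Set.Icc (0:ℝ) T)).exists_bound_of_continuousOn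
      (hcont.mono fun x hx => hx.1)
    set M : ℝ := max M0 0 with hM
    have hMnonneg : (0:ℝ) ≤ M := le_max_right _ _
    have hMb : ∀ x ∈ Set.Icc (0:ℝ) T, ‖X x‖ ≤ M := fun x hx => (hM0 x hx).trans (le_max_left _ _)
    refine ⟨⟨‖L‖ * M, by positivity⟩, ?_⟩
    refine lipschitzOnWith_iff_dist_le_mul.2 ?_
    intro t' ht' t ht
    rw [dist_eq_norm, dist_eq_norm]
    have hsub : ∀ ξ : Fin n → 𝕜, ‖(X t' - X t) ξ‖ ≤ ‖L‖ * M * |t' - t| * ‖ξ‖ := by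
      intro ξ
      obtain ⟨ψ', hψ', hXt'⟩ := hmain ξ t' ht'.1
      obtain ⟨ψ, hψ, hXt⟩ := hmain ξ t ht.1
      have e1 : (X t' - X t) ξ = L (ψ' - ψ) := by
        rw [ContinuousLinearMap.sub_apply, hXt', hXt, map_sub]; abel
      have hcontξ : ContinuousOn (fun s => X s ξ) (Set.Ici (0:ℝ)) :=
        (ContinuousLinearMap.apply 𝕜 (Fin n → 𝕜) ξ).continuous.comp_continuousOn hcont
      have hI : ∀ c ∈ Set.Icc (0:ℝ) T, IntervalIntegrable (fun s => X s ξ) volume 0 c := by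
        intro c hc
        refine ContinuousOn.intervalIntegrable ?_
        rw [Set.uIcc_of_le hc.1]
        exact hcontξ.mono fun x hx => hx.1
      have hnorm : ‖ψ' - ψ‖ ≤ M * ‖ξ‖ * |t' - t| := by
        refine (ContinuousMap.norm_le _ (by positivity)).2 fun θ => ?_
        have hθ2 : (θ : ℝ) ≤ 0 := θ.2.2
        have hb'mem : max (t' + (θ:ℝ)) 0 ∈ Set.Icc (0:ℝ) T :=
          ⟨le_max_right _ _, max_le (by linarith [ht'.2]) hT⟩
        have hbmem : max (t + (θ:ℝ)) 0 ∈ Set.Icc (0:ℝ) T :=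
          ⟨le_max_right _ _, max_le (by linarith [ht.2]) hT⟩
        rw [ContinuousMap.sub_apply, hψ' θ, hψ θ,
          intervalIntegral.integral_interval_sub_left (hI _ hb'mem) (hI _ hbmem)]
        have hbound : ∀ x ∈ Set.uIoc (max (t + (θ:ℝ)) 0) (max (t' + (θ:ℝ)) 0),
            ‖X x ξ‖ ≤ M * ‖ξ‖ := by
          intro x hx
          have hx' : x ∈ Set.Icc (0:ℝ) T :=
            Set.uIcc_subset_Icc hbmem hb'mem (Set.uIoc_subset_uIcc hx)
          calc ‖X x ξ‖ ≤ ‖X x‖ * ‖ξ‖ := (X x).le_opNorm ξ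
            _ ≤ M * ‖ξ‖ := by
                have := hMb x hx'
                gcongr
        calc ‖∫ s in (max (t + (θ:ℝ)) 0)..(max (t' + (θ:ℝ)) 0), X s ξ‖
            ≤ M * ‖ξ‖ * |max (t' + (θ:ℝ)) 0 - max (t + (θ:ℝ)) 0| :=
              intervalIntegral.norm_integral_le_of_norm_le_const hbound
          _ ≤ M * ‖ξ‖ * |t' - t| := by
              have habs : |max (t' + (θ:ℝ)) 0 - max (t + (θ:ℝ)) 0| ≤ |t' - t| := by
                calc |max (t' + (θ:ℝ)) 0 - max (t + (θ:ℝ)) 0|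
                    ≤ |(t' + (θ:ℝ)) - (t + (θ:ℝ))| := abs_max_sub_max_le_abs _ _ _
                  _ = |t' - t| := by ring_nf
              have : (0:ℝ) ≤ M * ‖ξ‖ := by positivity
              gcongr
      calc ‖(X t' - X t) ξ‖ = ‖L (ψ' - ψ)‖ := by rw [e1]
        _ ≤ ‖L‖ * ‖ψ' - ψ‖ := L.le_opNorm _
        _ ≤ ‖L‖ * (M * ‖ξ‖ * |t' - t|) := mul_le_mul_of_nonneg_left hnorm (ContinuousLinearMap.opNorm_nonneg L)
        _ = ‖L‖ * M * |t' - t| * ‖ξ‖ := by ring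
    have h2 := ContinuousLinearMap.opNorm_le_bound (X t' - X t)
      (show (0:ℝ) ≤ ‖L‖ * M * |t' - t| by positivity) hsub
    calc ‖X t' - X t‖ ≤ ‖L‖ * M * |t' - t| := h2
      _ = (⟨‖L‖ * M, by positivity⟩ : ℝ≥0) * ‖t' - t‖ := by
          simp [Real.norm_eq_abs]
  -- a globally Lipschitz model for `X` on `Icc 0 m`
  have model : ∀ m : ℝ, 0 ≤ m → ∃ (C : ℝ≥0) (g : ℝ → ((Fin n → 𝕜) →L[𝕜] (Fin n → 𝕜))),
      LipschitzWith C g ∧ (∀ u ∈ Set.Icc (0:ℝ) m, g u = X u) := by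
    intro m hm
    obtain ⟨C, hC⟩ := key m hm
    refine ⟨C, fun u => X ((Set.projIcc 0 m hm u : Set.Icc (0:ℝ) m) : ℝ), ?_, ?_⟩
    · apply LipschitzWith.of_dist_le_mul
      intro x y
      have h1 := lipschitzOnWith_iff_dist_le_mul.1 hC _ (Set.projIcc 0 m hm x).2
        _ (Set.projIcc 0 m hm y).2
      refine h1.trans ?_
      have h2 := (LipschitzWith.projIcc hm).dist_le_mul x y
      rw [NNReal.coe_one, one_mul] at h2
      rw [← Subtype.dist_eq] at *
      exact mul_le_mul_of_nonneg_left h2 C.coe_nonneg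
    · intro u hu
      simp only []
      rw [Set.projIcc_of_mem hm hu]
  have deq : ∀ (m : ℝ) (g : ℝ → ((Fin n → 𝕜) →L[𝕜] (Fin n → 𝕜))),
      (∀ u ∈ Set.Icc (0:ℝ) m, g u = X u) →
      ∀ s ∈ Set.Ioo (0:ℝ) m, deriv g s = deriv X s := by
    intro m g hg s hs
    apply Filter.EventuallyEq.deriv_eq
    filter_upwards [Ioo_mem_nhds hs.1 hs.2] with u hu
    exact hg u ⟨hu.1.le, hu.2.le⟩
  refine ⟨deriv X, ?_, ?_⟩
  · rw [locallyIntegrableOn_iff isClosed_Ici.isLocallyClosed]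
    intro k hk hkc
    obtain ⟨m0, hm0⟩ := hkc.isBounded.subset_closedBall 0
    set m : ℝ := max m0 0 with hmdef
    have hksub : k ⊆ Set.Icc 0 m := by
      intro x hx
      refine ⟨hk hx, ?_⟩
      have := hm0 hx
      rw [Metric.mem_closedBall, Real.dist_eq, sub_zero] at this
      exact le_max_of_le_left ((le_abs_self x).trans this)
    refine MeasureTheory.IntegrableOn.mono_set ?_ hksub
    obtain ⟨C, g, hgl, hge⟩ := model (m + 1) (by positivity)
    refine Measure.integrableOn_of_bounded (M := (C:ℝ)) measure_Icc_lt_top.ne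
      (stronglyMeasurable_deriv X).aestronglyMeasurable ?_
    have hne : ∀ᵐ x ∂(volume : Measure ℝ), x ≠ 0 := by
      rw [ae_iff]
      simp only [ne_eq, not_not, Set.setOf_eq_eq_singleton]
      exact Real.volume_singleton
    filter_upwards [ae_restrict_mem measurableSet_Icc, ae_restrict_of_ae hne] with x hx hx0
    have hxm : x ∈ Set.Ioo (0:ℝ) (m + 1) :=
      ⟨lt_of_le_of_ne hx.1 (Ne.symm hx0), by linarith [hx.2]⟩
    rw [← deq (m + 1) g hge x hxm]
    exact norm_deriv_le_of_lipschitzWith hgl x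
  · intro t ht
    obtain ⟨C, g, hgl, hge⟩ := model (t + 1) (by positivity)
    have h1 : ∫ s in (0:ℝ)..t, deriv X s = ∫ s in (0:ℝ)..t, deriv g s := by
      rw [intervalIntegral.integral_of_le ht, intervalIntegral.integral_of_le ht]
      refine setIntegral_congr_fun measurableSet_Ioc fun s hs => ?_
      exact (deq (t + 1) g hge s ⟨hs.1, by linarith [hs.2]⟩).symm
    rw [h1, lipschitz_integral_deriv hgl ht, hge t ⟨ht, by linarith⟩,
      hge 0 ⟨le_refl _, by linarith⟩, hX0]
    abel
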